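/- Let (T, [[·,·,·]]) be a Lie triple system over ℝ and let b be a symmetric bilinear form on T. Then b is right invariant (b([[x,y,z]],u) = b([[z,u,x]],y) for all x,y,z,u ∈ T) if and only if b is left invariant (b([[x,y,z]],u) = -b(z,[[x,y,u]]) for all x,y,z,u ∈ T). -/

import Mathlib

/-!
Put `f x y z u = b([[x,y,z]], u)`. Like a curvature tensor, `f` is skew in its first pair and
satisfies the first Bianchi identity in its first three slots. By symmetry of `b`, left
invariance says that `f` is also skew in its last pair, and right invariance that `f` is
symmetric under exchanging the two pairs. Pair symmetry and skewness in the first pair give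
skewness in the second; conversely, the classical argument for the Riemann tensor (adding four
Bianchi identities) recovers pair symmetry from the two skew symmetries.
-/

/-- A Lie triple system over ℝ: a real vector space with a trilinear operation
satisfying (T02), (T1) and (T2). -/
structure LieTripleSystem (T : Type*) [AddCommGroup T] [Module ℝ T] where
  tri : T →ₗ[ℝ] T →ₗ[ℝ] T →ₗ[ℝ] T
  tri_skew : ∀ x y z : T, tri x y z = - tri y x z
  tri_cyclic : ∀ x y z : T, tri x y z + tri y z x + tri z x y = 0
  tri_leibniz : ∀ u v x y z : T,
    tri u v (tri x y z) = tri (tri u v x) y z + tri x (tri u v y) z + tri x y (tri u v z)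

section FourForm

variable {α : Type*} (f : α → α → α → α → ℝ)

theorem skew_right_of_skew_left_of_pair_symm (hleft : ∀ x y z u, f x y z u = -f y x z u)
    (hpair : ∀ x y z u, f x y z u = f z u x y) (x y z u : α) :
    f x y z u = -f x y u z := by
  rw [hpair, hleft, hpair]

theorem pair_symm_of_skew_of_cyclic (hleft : ∀ x y z u, f x y z u = -f y x z u)
    (hright : ∀ x y z u, f x y z u = -f x y u z)
    (hcyc : ∀ x y z u, f x y z u + f y z x u + f z x y u = 0) (x y z u : α) :
    f x y z u = f z u x y := by
  -- after both skew symmetries, the alternating sum of these four Bianchi identities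
  -- reads `2 * (f x y z u - f z u x y) = 0`
  linarith [hcyc x y z u, hcyc y z u x, hcyc z u x y, hcyc u x y z,
    hleft z x y u, hleft y u x z, hright x y z u, hright y z x u, hright z u x y,
    hright x z y u, hright u y z x, hright u x z y]

end FourForm

namespace LieTripleSystem

variable {T : Type*} [AddCommGroup T] [Module ℝ T] (L : LieTripleSystem T)
  (b : LinearMap.BilinForm ℝ T)

theorem bilin_tri_skew (x y z u : T) : b (L.tri x y z) u = -b (L.tri y x z) u := by
  rw [L.tri_skew, map_neg, LinearMap.neg_apply]

theorem bilin_tri_cyclic (x y z u : T) :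
    b (L.tri x y z) u + b (L.tri y z x) u + b (L.tri z x y) u = 0 := by
  rw [← LinearMap.add_apply, ← map_add, ← LinearMap.add_apply, ← map_add, L.tri_cyclic,
    map_zero, LinearMap.zero_apply]

end LieTripleSystem

theorem rightInvariant_iff_leftInvariant
    {T : Type*} [AddCommGroup T] [Module ℝ T] (L : LieTripleSystem T)
    (b : LinearMap.BilinForm ℝ T) (hsymm : ∀ x y : T, b x y = b y x) :
    (∀ x y z u : T, b (L.tri x y z) u = b (L.tri z u x) y) ↔
      (∀ x y z u : T, b (L.tri x y z) u = - b z (L.tri x y u)) := by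
  let f : T → T → T → T → ℝ := fun x y z u => b (L.tri x y z) u
  have hleft := L.bilin_tri_skew b
  simp only [hsymm _ (L.tri _ _ _)]
  exact ⟨skew_right_of_skew_left_of_pair_symm f hleft,
    fun hright => pair_symm_of_skew_of_cyclic f hleft hright (L.bilin_tri_cyclic b)⟩
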